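/- The quotient of R₂ by the two-sided ideal N generated by (tst)³ has finite rank as a ℤ-module; in particular only finitely many monomials in s, t are nonzero modulo N. -/

import Mathlib

/-!
The tree-indexed vector space `V` over `ℚ` with basis the free monoid on two letters
(encoded as `List Bool`, with `false` the letter `0` and `true` the letter `1`).
The recursive matrices `s = [[0,0],[1,0]]` and `t = [[0,t],[0,s]]` of the ring `R₂`
act on the decomposition `V = ℚ·φ ⊕ 0V ⊕ 1V` by the block-matrix recursion.
-/

noncomputable section

abbrev V : Type := List Bool →₀ ℚ

/-- Prefixing by a letter: the embedding `V → yV`. -/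
def pre (b : Bool) : V →ₗ[ℚ] V := Finsupp.lmapDomain ℚ ℚ (List.cons b)

/-- Value of `s = [[0,0],[1,0]]` on a basis word. -/
def Sfun : List Bool → V
  | [] => 0
  | false :: u => Finsupp.single (true :: u) 1
  | true :: _ => 0

/-- Value of `t = [[0,t],[0,s]]` on a basis word, by recursion. -/
def Tfun : List Bool → V
  | [] => 0
  | false :: _ => 0
  | true :: u => pre false (Tfun u) + pre true (Sfun u)

/-- The generator `s` of `R₂`. -/
def sR : Module.End ℚ V := Finsupp.linearCombination ℚ Sfun

/-- The generator `t` of `R₂`. -/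
def tR : Module.End ℚ V := Finsupp.linearCombination ℚ Tfun

/-- The level-preserving operator with block form `[[e,0,0],[0,A,B],[0,C,D]]` on
`V = ℚ·φ ⊕ 0V ⊕ 1V`, written `e ⊕ [[A,B],[C,D]]`. -/
def blk (e : ℚ) (A B C D : Module.End ℚ V) : Module.End ℚ V :=
  Finsupp.linearCombination ℚ (fun w => match w with
    | [] => Finsupp.single ([] : List Bool) e
    | false :: u => pre false (A (Finsupp.single u 1)) + pre true (C (Finsupp.single u 1))
    | true :: u => pre false (B (Finsupp.single u 1)) + pre true (D (Finsupp.single u 1)))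

/-- The monomial in `s, t` given by a word (`false ↦ s`, `true ↦ t`). -/
def mono (w : List Bool) : Module.End ℚ V :=
  (w.map (fun b => if b then tR else sR)).prod

/-- The ring `R₂` generated by `s` and `t` (a non-unital subring of `End ℚ V`). -/
def R2 : NonUnitalSubring (Module.End ℚ V) := NonUnitalSubring.closure {sR, tR}

end

noncomputable section

/-- The element `(tst)³`. -/
def g19 : Module.End ℚ V := (tR * sR * tR) ^ 3

/-- The two-sided ideal `N` of `R₂` generated by `(tst)³`. -/
def Nideal : Set (Module.End ℚ V) :=
  (Submodule.span ℤ ({g19} ∪ (fun r => r * g19) '' (R2 : Set (Module.End ℚ V)) ∪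
      (fun r => g19 * r) '' (R2 : Set (Module.End ℚ V)) ∪
      {x | ∃ r ∈ R2, ∃ r' ∈ R2, x = r * g19 * r'}) : Submodule ℤ (Module.End ℚ V))

/-!
In the block decomposition `V = ℚ·φ ⊕ 0V ⊕ 1V` we have `s = 0 ⊕ [[0,0],[1,0]]` and
`t = 0 ⊕ [[0,t],[0,s]]`, and block multiplication gives `s² = 0`, `t³ = 0` and
`st = 0 ⊕ [[0,0],[0,t]]`, hence `(st)³ = 0`. Moreover `tstst` is the twice-nested corner
block of `ts`, and `(ts)⁴ = t(st)³s = 0`, so `(tstst)⁴ = 0`. Hence every monomial having `ss`,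
`ttt`, `(st)³`, `(tstst)⁴` or `(tst)³` as a factor lies in `N`. A search through the words
avoiding these five factors shows that none is longer than 25 letters, so `R₂` is spanned
modulo `N` by the finitely many monomials of length at most 25.
-/

theorem linearMap_ext_single {f g : Module.End ℚ V}
    (h : ∀ w : List Bool, f (Finsupp.single w 1) = g (Finsupp.single w 1)) : f = g :=
  Finsupp.basisSingleOne.ext fun w => by simpa using h w

theorem pre_single (b : Bool) (u : List Bool) :
    pre b (Finsupp.single u 1) = Finsupp.single (b :: u) 1 := by
  simp [pre]

section Blocks

variable (e : ℚ) (A B C D : Module.End ℚ V)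

theorem blk_single_nil : blk e A B C D (Finsupp.single [] 1) = Finsupp.single [] e := by
  simp [blk]

theorem blk_single_false (u : List Bool) :
    blk e A B C D (Finsupp.single (false :: u) 1) =
      pre false (A (Finsupp.single u 1)) + pre true (C (Finsupp.single u 1)) := by
  simp [blk]

theorem blk_single_true (u : List Bool) :
    blk e A B C D (Finsupp.single (true :: u) 1) =
      pre false (B (Finsupp.single u 1)) + pre true (D (Finsupp.single u 1)) := by
  simp [blk]

theorem blk_comp_pre_false :
    blk e A B C D ∘ₗ pre false = pre false ∘ₗ A + pre true ∘ₗ C :=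
  linearMap_ext_single fun u => by simp [pre_single, blk_single_false]

theorem blk_comp_pre_true :
    blk e A B C D ∘ₗ pre true = pre false ∘ₗ B + pre true ∘ₗ D :=
  linearMap_ext_single fun u => by simp [pre_single, blk_single_true]

theorem blk_mul (e' : ℚ) (A' B' C' D' : Module.End ℚ V) :
    blk e A B C D * blk e' A' B' C' D' =
      blk (e * e') (A * A' + B * C') (A * B' + B * D') (C * A' + D * C') (C * B' + D * D') := by
  have hF := LinearMap.congr_fun (blk_comp_pre_false e A B C D)
  have hT := LinearMap.congr_fun (blk_comp_pre_true e A B C D)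
  simp only [LinearMap.comp_apply, LinearMap.add_apply] at hF hT
  refine linearMap_ext_single fun w => ?_
  match w with
  | [] =>
    rw [Module.End.mul_apply, blk_single_nil e', ← Finsupp.smul_single_one, map_smul,
      blk_single_nil, blk_single_nil, Finsupp.smul_single, smul_eq_mul, mul_comm]
  | false :: u =>
    simp only [Module.End.mul_apply, blk_single_false, map_add, hF, hT, LinearMap.add_apply]
    abel
  | true :: u =>
    simp only [Module.End.mul_apply, blk_single_true, map_add, hF, hT, LinearMap.add_apply]
    abel

end Blocks

theorem blk_zero : blk 0 0 0 0 0 = 0 :=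
  linearMap_ext_single fun w => by
    match w with
    | [] => simp [blk_single_nil]
    | false :: u => simp [blk_single_false]
    | true :: u => simp [blk_single_true]

theorem blk_diag_pow (X : Module.End ℚ V) (n : ℕ) :
    blk 0 0 0 0 X ^ (n + 1) = blk 0 0 0 0 (X ^ (n + 1)) := by
  induction n with
  | zero => simp
  | succ n ih => rw [pow_succ, ih, blk_mul, pow_succ X (n + 1)]; simp

theorem sR_eq_blk : sR = blk 0 0 0 1 0 :=
  linearMap_ext_single fun w => by
    match w with
    | [] => simp [sR, blk_single_nil, Sfun]
    | false :: u => simp [sR, blk_single_false, Sfun, pre_single]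
    | true :: u => simp [sR, blk_single_true, Sfun]

theorem tR_eq_blk : tR = blk 0 0 tR 0 sR :=
  linearMap_ext_single fun w => by
    match w with
    | [] => simp [tR, blk_single_nil, Tfun]
    | false :: u => simp [tR, blk_single_false, Tfun]
    | true :: u => simp [tR, sR, blk_single_true, Tfun]

theorem blk_mul_sR (A B C D : Module.End ℚ V) : blk 0 A B C D * sR = blk 0 B 0 D 0 := by
  rw [sR_eq_blk, blk_mul]; simp

theorem blk_mul_tR (A B C D : Module.End ℚ V) :
    blk 0 A B C D * tR = blk 0 0 (A * tR + B * sR) 0 (C * tR + D * sR) := by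
  conv_lhs => rw [tR_eq_blk]
  rw [blk_mul]; simp

theorem sR_mul_sR : sR * sR = 0 := by
  nth_rw 1 [sR_eq_blk]
  rw [blk_mul_sR, blk_zero]

theorem sR_mul_tR : sR * tR = blk 0 0 0 0 tR := by
  rw [sR_eq_blk, blk_mul_tR]; simp

theorem tR_mul_sR : tR * sR = blk 0 tR 0 sR 0 := by
  rw [tR_eq_blk, blk_mul_sR, ← tR_eq_blk]

theorem tR_pow_three : tR ^ 3 = 0 := by
  have htt : tR * tR = blk 0 0 (tR * sR) 0 0 := by
    nth_rw 1 [tR_eq_blk]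
    rw [blk_mul_tR]; simp [sR_mul_sR]
  rw [pow_three', htt, blk_mul_tR]; simp [mul_assoc, sR_mul_sR, blk_zero]

theorem sR_mul_tR_pow_three : (sR * tR) ^ 3 = 0 := by
  rw [sR_mul_tR, blk_diag_pow, tR_pow_three, blk_zero]

theorem tR_mul_sR_pow_four : (tR * sR) ^ 4 = 0 := by
  rw [pow_succ, ← mul_assoc, mul_pow_mul, sR_mul_tR_pow_three]; simp

theorem tstst_eq_blk : tR * sR * tR * sR * tR = blk 0 0 0 0 (blk 0 0 0 0 (tR * sR)) := by
  have htt : tR * tR * tR = 0 := by rw [← pow_three', tR_pow_three]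
  simp only [tR_mul_sR, blk_mul_tR, blk_mul_sR, sR_mul_tR, htt, zero_mul, add_zero,
    zero_add]

theorem tstst_pow_four : (tR * sR * tR * sR * tR) ^ 4 = 0 := by
  rw [tstst_eq_blk, blk_diag_pow, blk_diag_pow, tR_mul_sR_pow_four, blk_zero, blk_zero]

section Avoidance

variable {α : Type*} [DecidableEq α] (letters : List α) (pats : List (List α))

/-- The words of length `n` over `letters` having no factor in `pats`. They are grown by
prepending letters, so only prefixes need to be tested at each step. -/
def avoidingWords : ℕ → List (List α)
  | 0 => [[]]
  | n + 1 => (avoidingWords n).flatMap fun w =>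
      (letters.map (· :: w)).filter fun w => pats.all fun p => !p.isPrefixOf w

variable {letters pats}

theorem mem_avoidingWords (hletters : ∀ a, a ∈ letters) :
    ∀ {w : List α}, (∀ p ∈ pats, ¬p <:+: w) → w ∈ avoidingWords letters pats w.length
  | [], _ => List.mem_singleton_self _
  | a :: w, hw => by
    refine List.mem_flatMap.mpr ⟨w, mem_avoidingWords hletters fun p hp hpw => ?_, ?_⟩
    · exact hw p hp (hpw.trans (List.suffix_cons a w).isInfix)
    · refine List.mem_filter.mpr ⟨List.mem_map_of_mem (hletters a), ?_⟩
      simpa using fun p hp =>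
        Bool.eq_false_iff.mpr fun h => hw p hp (List.isPrefixOf_iff_prefix.mp h).isInfix

theorem exists_infix_of_avoidingWords_eq_nil (hletters : ∀ a, a ∈ letters) {n : ℕ}
    (hn : avoidingWords letters pats n = []) {w : List α} (hw : n ≤ w.length) :
    ∃ p ∈ pats, p <:+: w := by
  by_contra! havoid
  have htake := mem_avoidingWords hletters fun p hp hpw =>
    havoid p hp (hpw.trans (w.take_prefix n).isInfix)
  rw [List.length_take_of_le hw, hn] at htake
  exact List.not_mem_nil htake

end Avoidance

theorem mono_append (u v : List Bool) : mono (u ++ v) = mono u * mono v := by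
  simp [mono]

def wordPow (w : List Bool) (n : ℕ) : List Bool := (List.replicate n w).flatten

theorem mono_wordPow (w : List Bool) (n : ℕ) : mono (wordPow w n) = mono w ^ n := by
  induction n with
  | zero => simp [wordPow, mono]
  | succ n ih =>
    rw [wordPow, List.replicate_succ, List.flatten_cons, mono_append, ← wordPow, ih, pow_succ']

def forbidden : List (List Bool) :=
  [wordPow [false] 2, wordPow [true] 3, wordPow [false, true] 3,
    wordPow [true, false, true, false, true] 4, wordPow [true, false, true] 3]

theorem mono_eq_zero_or_g19_of_mem_forbidden {p : List Bool} (hp : p ∈ forbidden) :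
    mono p = 0 ∨ mono p = g19 := by
  simp only [forbidden, List.mem_cons, List.not_mem_nil, or_false] at hp
  rcases hp with rfl | rfl | rfl | rfl | rfl <;> simp only [mono_wordPow] <;>
    simp only [mono, List.map_cons, List.map_nil, List.prod_cons, List.prod_nil, mul_one,
      Bool.false_eq_true, if_true, if_false]
  · exact .inl (by rw [sq, sR_mul_sR])
  · exact .inl tR_pow_three
  · exact .inl sR_mul_tR_pow_three
  · exact .inl (by simpa only [mul_assoc] using tstst_pow_four)
  · exact .inr (by simp only [g19, mul_assoc])

-- The longest words avoiding `forbidden` have length 25.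
theorem avoidingWords_forbidden : avoidingWords [false, true] forbidden 26 = [] := by decide

theorem NonUnitalSubring.closure_range_subset_span_prod {R α : Type*} [Ring R] (f : α → R) :
    (NonUnitalSubring.closure (Set.range f) : Set R) ⊆
      Submodule.span ℤ ((fun w : List α => (w.map f).prod) '' {w | w ≠ []}) := by
  let products : Subsemigroup R :=
    { carrier := (fun w : List α => (w.map f).prod) '' {w | w ≠ []}
      mul_mem' := by
        rintro _ _ ⟨u, hu, rfl⟩ ⟨v, -, rfl⟩
        exact ⟨u ++ v, fun h => hu (List.append_eq_nil_iff.mp h).1, by simp⟩ }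
  have hgen : Set.range f ⊆ products := by
    rintro _ ⟨a, rfl⟩
    exact ⟨[a], List.cons_ne_nil a [], by simp⟩
  intro x hx
  rw [SetLike.mem_coe, NonUnitalSubring.mem_closure_iff,
    ← Submodule.span_int_eq_addSubgroupClosure] at hx
  exact Submodule.span_mono (Subsemigroup.closure_le.mpr hgen) hx

theorem R2_subset_span_mono :
    (R2 : Set (Module.End ℚ V)) ⊆ Submodule.span ℤ (mono '' {w | w ≠ []}) := by
  have hgen : Set.range (fun b : Bool => if b then tR else sR) = {sR, tR} := by
    ext x; simp
  rw [R2, ← hgen]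
  exact NonUnitalSubring.closure_range_subset_span_prod _

theorem mono_mem_R2 : ∀ {w : List Bool}, w ≠ [] → mono w ∈ R2
  | [b], _ => by cases b <;> exact NonUnitalSubring.subset_closure (by simp [mono])
  | b :: c :: w, _ => by
    rw [← List.singleton_append, mono_append]
    exact mul_mem (mono_mem_R2 (List.cons_ne_nil b [])) (mono_mem_R2 (List.cons_ne_nil c w))

theorem mono_mul_g19_mul_mono_mem_Nideal (u v : List Bool) :
    mono u * g19 * mono v ∈ Nideal := by
  rw [Nideal, SetLike.mem_coe]
  apply Submodule.subset_span
  have hnil : mono [] = 1 := rfl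
  rcases eq_or_ne u [] with rfl | hu <;> rcases eq_or_ne v [] with rfl | hv
  · exact .inl (.inl (.inl (by simp [hnil])))
  · exact .inl (.inr ⟨mono v, mono_mem_R2 hv, by simp [hnil]⟩)
  · exact .inl (.inl (.inr ⟨mono u, mono_mem_R2 hu, by simp [hnil]⟩))
  · exact .inr ⟨mono u, mono_mem_R2 hu, mono v, mono_mem_R2 hv, rfl⟩

theorem mono_mem_Nideal_of_length {w : List Bool} (hw : 26 ≤ w.length) : mono w ∈ Nideal := by
  obtain ⟨p, hp, u, v, rfl⟩ :=
    exists_infix_of_avoidingWords_eq_nil (by simp) avoidingWords_forbidden hw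
  rw [mono_append, mono_append]
  rcases mono_eq_zero_or_g19_of_mem_forbidden hp with h | h
  · rw [h, mul_zero, zero_mul]; exact zero_mem _
  · rw [h]; exact mono_mul_g19_mul_mono_mem_Nideal u v

/-- The quotient `R₂/N` by the ideal generated by `(tst)³` has finite `ℤ`-rank: only
finitely many monomials are nonzero modulo `N`, and `R₂` is spanned over `ℤ` by finitely
many elements together with `N`. -/
theorem quotient_finite_rank :
    {w : List Bool | w ≠ [] ∧ mono w ∉ Nideal}.Finite ∧
    ∃ F : Finset (Module.End ℚ V), ∀ x ∈ R2,
      x ∈ Submodule.span ℤ ((F : Set (Module.End ℚ V)) ∪ Nideal) := by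
  have hshort := List.finite_length_lt Bool 26
  refine ⟨hshort.subset fun w hw => not_le.mp fun h => hw.2 (mono_mem_Nideal_of_length h), ?_⟩
  classical
  refine ⟨hshort.toFinset.image mono, fun x hx =>
    Submodule.span_le.mpr ?_ (R2_subset_span_mono hx)⟩
  rintro _ ⟨w, -, rfl⟩
  rcases lt_or_ge w.length 26 with h | h
  · exact Submodule.subset_span (.inl (by simpa using ⟨w, h, rfl⟩))
  · exact Submodule.subset_span (.inr (mono_mem_Nideal_of_length h))

end
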